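/- For every integer N ≥ 1 and every real q with 0 < q < 1/2, the following exact identity holds: ∑_{n=1}^{N−1} q(1−q)^{n−1} · R(n, q) + (1−q)^{N−1} · R(N, q) = N/(2q). -/

import Mathlib

/-- `R n p = (1/(2p²))·((1−p)^{−(n−1)} − (1−p))`, the exact expected run time of the
(1+1) EA with uniform bit flip probability `p` on the `n`-bit LeadingOnes function
(Böttcher–Doerr–Neumann, Sudholt, Ladret). -/
noncomputable def runtimeLO (n : ℕ) (p : ℝ) : ℝ :=
  (1 / (2 * p ^ 2)) * ((1 - p) ^ (-((n : ℤ) - 1)) - (1 - p))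

/-! Weighted by `(1 - q)^(n-1)`, the run time `R(n, q)` becomes `(1 - (1 - q)^n) / (2q²)`,
and the `TrunkGeo(N, q)`-average of these terms telescopes: passing from `N` to `N + 1`
adds exactly `q / (2q²) = 1 / (2q)`. -/

lemma pow_mul_runtimeLO_succ {q : ℝ} (hq : q ≠ 1) (m : ℕ) :
    (1 - q) ^ m * runtimeLO (m + 1) q = (1 - (1 - q) ^ (m + 1)) / (2 * q ^ 2) := by
  have hr : (1 - q) ^ m ≠ 0 := pow_ne_zero _ (sub_ne_zero.mpr hq.symm)
  rw [runtimeLO, show -(((m + 1 : ℕ) : ℤ) - 1) = -(m : ℤ) by push_cast; ring, zpow_neg,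
    zpow_natCast]
  field_simp
  ring

lemma sum_range_mul_one_sub_pow_add (q : ℝ) (m : ℕ) :
    ∑ n ∈ Finset.range m, q * (1 - (1 - q) ^ (n + 1)) + (1 - (1 - q) ^ (m + 1)) =
      q * (m + 1) := by
  induction m with
  | zero => simp
  | succ m ih =>
    rw [Finset.sum_range_succ]
    push_cast
    linear_combination ih

/-- Exact identity from the computation after Theorem 3.11: the `TrunkGeo(N,q)`-average
of `R(n, q)` equals `N/(2q)`. -/
theorem stmt9 (N : ℕ) (hN : 1 ≤ N) (q : ℝ) (hq0 : 0 < q) (hq1 : q < 1 / 2) :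
    (∑ n ∈ Finset.Icc 1 (N - 1), q * (1 - q) ^ (n - 1) * runtimeLO n q) +
      (1 - q) ^ (N - 1) * runtimeLO N q = (N : ℝ) / (2 * q) := by
  obtain ⟨m, rfl⟩ := Nat.exists_eq_add_of_le' hN
  have hq : q ≠ 1 := by linarith
  have hterm (n : ℕ) : q * (1 - q) ^ n * runtimeLO (n + 1) q =
      q * (1 - (1 - q) ^ (n + 1)) / (2 * q ^ 2) := by
    rw [mul_assoc, pow_mul_runtimeLO_succ hq, mul_div_assoc]
  rw [Nat.add_sub_cancel, ← Finset.Ico_add_one_right_eq_Icc, Finset.sum_Ico_eq_sum_range,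
    Nat.add_sub_cancel]
  simp only [add_comm 1, Nat.add_sub_cancel, hterm, pow_mul_runtimeLO_succ hq,
    ← Finset.sum_div, ← add_div, sum_range_mul_one_sub_pow_add]
  field_simp
  push_cast
  ring
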